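/- In the violation example with m=3: for 0 < ε < 1, FDR^{(1)} = Pr(p_1 < min(p_2,p_3)) = ε[ε²/3 + ε(1-ε) + (1-ε)²] and FDR^{(2)} = [1 - (1-ε) - ε³/3]/2 = ε/2 - ε³/6, and FDR^{(1)} > FDR^{(2)} for all sufficiently small ε. -/

import Mathlib

/-!
Conditioning on the null p-value `p₁ = t` and using independence,
`Pr(p₁ < min(p₂,p₃)) = ∫₀¹ Pr(p₂ > t)² dt` and `Pr(max(p₂,p₃) < p₁) = ∫₀¹ Pr(p₂ < t)² dt`.
Since every alternative p-value is at most `ε`, `Pr(p₂ > t)` is `1 - t` on `[0, ε)` and `0` beyond,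
while `Pr(p₂ < t)` is `t` on `[0, ε]` and `1` beyond, so both integrals are elementary.
The gap `FDR⁽¹⁾ - FDR⁽²⁾` is `ε (1 - ε)² / 2`, positive on `(0, 1)`.
-/

open MeasureTheory ProbabilityTheory

/-- The alternative law `ε·U[0,ε] + (1-ε)·δ_ε`: mass `ε` spread uniformly on
`[0,ε]` (i.e. Lebesgue measure restricted to `[0,ε]`) plus an atom of mass
`1-ε` at `ε`. -/
noncomputable def altLaw (ε : ℝ) : Measure ℝ :=
  volume.restrict (Set.Icc 0 ε) + ENNReal.ofReal (1 - ε) • Measure.dirac ε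

open Set

namespace ProbabilityTheory.iIndepFun

variable {Ω ι : Type*} [MeasurableSpace Ω] {μ : Measure Ω} [IsProbabilityMeasure μ]
  {p : ι → Ω → ℝ} {i j k : ι}

lemma map_triple_eq_prod (h : iIndepFun p μ) (hp : ∀ i, Measurable (p i)) (hij : i ≠ j)
    (hik : i ≠ k) (hjk : j ≠ k) :
    μ.map (fun ω ↦ (p i ω, p j ω, p k ω))
      = (μ.map (p i)).prod ((μ.map (p j)).prod (μ.map (p k))) := by
  rw [((h.indepFun_prodMk hp j k i hij.symm hik.symm).symm.map_prod_eq_prod_map_map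
      (hp i).aemeasurable ((hp j).prodMk (hp k)).aemeasurable),
    (h.indepFun hjk).map_prod_eq_prod_map_map (hp j).aemeasurable (hp k).aemeasurable]

lemma measure_triple_mem_eq_lintegral (h : iIndepFun p μ) (hp : ∀ i, Measurable (p i)) (hij : i ≠ j)
    (hik : i ≠ k) (hjk : j ≠ k) {S : Set (ℝ × ℝ × ℝ)} (hS : MeasurableSet S) :
    μ {ω | (p i ω, p j ω, p k ω) ∈ S}
      = ∫⁻ t, (μ.map (p j)).prod (μ.map (p k)) (Prod.mk t ⁻¹' S) ∂μ.map (p i) := by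
  rw [← Measure.prod_apply hS, ← h.map_triple_eq_prod hp hij hik hjk,
    Measure.map_apply (by fun_prop) hS]
  rfl

lemma measure_lt_min_eq_lintegral (h : iIndepFun p μ) (hp : ∀ i, Measurable (p i)) (hij : i ≠ j)
    (hik : i ≠ k) (hjk : j ≠ k) :
    μ {ω | p i ω < min (p j ω) (p k ω)}
      = ∫⁻ t, μ.map (p j) (Ioi t) * μ.map (p k) (Ioi t) ∂μ.map (p i) := by
  have hS : MeasurableSet {z : ℝ × ℝ × ℝ | z.1 < min z.2.1 z.2.2} :=
    measurableSet_lt (by fun_prop) (by fun_prop)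
  refine (h.measure_triple_mem_eq_lintegral hp hij hik hjk hS).trans (lintegral_congr fun t ↦ ?_)
  rw [← Measure.prod_prod]
  congr 1 with z
  simp

lemma measure_max_lt_eq_lintegral (h : iIndepFun p μ) (hp : ∀ i, Measurable (p i)) (hij : i ≠ j)
    (hik : i ≠ k) (hjk : j ≠ k) :
    μ {ω | max (p j ω) (p k ω) < p i ω}
      = ∫⁻ t, μ.map (p j) (Iio t) * μ.map (p k) (Iio t) ∂μ.map (p i) := by
  have hS : MeasurableSet {z : ℝ × ℝ × ℝ | max z.2.1 z.2.2 < z.1} :=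
    measurableSet_lt (by fun_prop) (by fun_prop)
  refine (h.measure_triple_mem_eq_lintegral hp hij hik hjk hS).trans (lintegral_congr fun t ↦ ?_)
  rw [← Measure.prod_prod]
  congr 1 with z
  simp

end ProbabilityTheory.iIndepFun

lemma altLaw_apply {ε : ℝ} {s : Set ℝ} (hs : MeasurableSet s) :
    altLaw ε s = volume (s ∩ Icc 0 ε) + ENNReal.ofReal (1 - ε) * s.indicator 1 ε := by
  simp [altLaw, Measure.restrict_apply hs, Measure.dirac_apply' _ hs]

lemma altLaw_Ioi_of_lt {ε t : ℝ} (ht : 0 ≤ t) (htε : t < ε) (hε : ε ≤ 1) :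
    altLaw ε (Ioi t) = ENNReal.ofReal (1 - t) := by
  have : Ioi t ∩ Icc 0 ε = Ioc t ε := by
    ext x; simp only [mem_inter_iff, mem_Ioi, mem_Icc, mem_Ioc]; grind
  rw [altLaw_apply measurableSet_Ioi, this, Real.volume_Ioc, indicator_of_mem (mem_Ioi.2 htε),
    Pi.one_apply, mul_one, ← ENNReal.ofReal_add (by linarith) (by linarith)]
  ring_nf

lemma altLaw_Ioi_of_le {ε t : ℝ} (htε : ε ≤ t) : altLaw ε (Ioi t) = 0 := by
  have : Ioi t ∩ Icc 0 ε = ∅ := by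
    ext x; simp only [mem_inter_iff, mem_Ioi, mem_Icc, mem_empty_iff_false, iff_false]; grind
  rw [altLaw_apply measurableSet_Ioi, this, indicator_of_notMem (notMem_Ioi.2 htε)]
  simp

lemma altLaw_Iio_of_le {ε t : ℝ} (htε : t ≤ ε) :
    altLaw ε (Iio t) = ENNReal.ofReal t := by
  have : Iio t ∩ Icc 0 ε = Ico 0 t := by
    ext x; simp only [mem_inter_iff, mem_Iio, mem_Icc, mem_Ico]; grind
  rw [altLaw_apply measurableSet_Iio, this, indicator_of_notMem (notMem_Iio.2 htε)]
  simp

lemma altLaw_Iio_of_lt {ε t : ℝ} (hε0 : 0 ≤ ε) (hε1 : ε ≤ 1) (htε : ε < t) :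
    altLaw ε (Iio t) = 1 := by
  rw [altLaw_apply measurableSet_Iio, inter_eq_self_of_subset_right
      (fun x hx ↦ mem_Iio.2 (hx.2.trans_lt htε)), Real.volume_Icc, indicator_of_mem (mem_Iio.2 htε),
    Pi.one_apply, mul_one, ← ENNReal.ofReal_add (by linarith) (by linarith)]
  simp

lemma setLIntegral_Ioc_ofReal_eq_intervalIntegral {f : ℝ → ℝ} {a b : ℝ} (hab : a ≤ b)
    (hf : IntegrableOn f (Ioc a b)) (hf0 : ∀ t ∈ Ioc a b, 0 ≤ f t) :
    ∫⁻ t in Ioc a b, ENNReal.ofReal (f t) = ENNReal.ofReal (∫ t in a..b, f t) := by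
  rw [intervalIntegral.integral_of_le hab,
    ofReal_integral_eq_lintegral_ofReal hf
      ((ae_restrict_iff' measurableSet_Ioc).2 (ae_of_all _ hf0))]

lemma setLIntegral_altLaw_Ioi_mul_self {ε : ℝ} (hε0 : 0 ≤ ε) (hε1 : ε ≤ 1) :
    ∫⁻ t in Icc 0 1, altLaw ε (Ioi t) * altLaw ε (Ioi t)
      = ENNReal.ofReal (ε - ε ^ 2 + ε ^ 3 / 3) := by
  have hsmall : ∫⁻ t in Ico 0 ε, altLaw ε (Ioi t) * altLaw ε (Ioi t)
      = ∫⁻ t in Ioc 0 ε, ENNReal.ofReal ((1 - t) * (1 - t)) := by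
    rw [setLIntegral_congr_fun measurableSet_Ico fun t ht ↦ by
      rw [altLaw_Ioi_of_lt ht.1 ht.2 hε1, ← ENNReal.ofReal_mul (by linarith [ht.2])]]
    exact setLIntegral_congr Ico_ae_eq_Ioc
  have hlarge : ∫⁻ t in Icc ε 1, altLaw ε (Ioi t) * altLaw ε (Ioi t) = 0 := by
    rw [setLIntegral_congr_fun measurableSet_Icc fun t ht ↦ by rw [altLaw_Ioi_of_le ht.1, zero_mul]]
    exact lintegral_zero
  have hint : ∫ t in (0:ℝ)..ε, (1 - t) * (1 - t) = ε - ε ^ 2 + ε ^ 3 / 3 := by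
    simp only [← sq]
    rw [intervalIntegral.integral_comp_sub_left (fun x ↦ x ^ 2), integral_pow]
    ring
  rw [← Ico_union_Icc_eq_Icc hε0 hε1,
    lintegral_union measurableSet_Icc (disjoint_left.2 fun _ h₁ h₂ ↦ h₁.2.not_ge h₂.1),
    hsmall, hlarge, add_zero, setLIntegral_Ioc_ofReal_eq_intervalIntegral hε0
      (by fun_prop : Continuous fun t : ℝ ↦ (1 - t) * (1 - t)).integrableOn_Ioc
      fun t _ ↦ mul_self_nonneg _, hint]

lemma setLIntegral_altLaw_Iio_mul_self {ε : ℝ} (hε0 : 0 ≤ ε) (hε1 : ε ≤ 1) :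
    ∫⁻ t in Icc 0 1, altLaw ε (Iio t) * altLaw ε (Iio t)
      = ENNReal.ofReal (1 - ε + ε ^ 3 / 3) := by
  have hsmall : ∫⁻ t in Icc 0 ε, altLaw ε (Iio t) * altLaw ε (Iio t)
      = ∫⁻ t in Ioc 0 ε, ENNReal.ofReal (t * t) := by
    rw [setLIntegral_congr_fun measurableSet_Icc fun t ht ↦ by
      rw [altLaw_Iio_of_le ht.2, ← ENNReal.ofReal_mul ht.1]]
    exact setLIntegral_congr Ioc_ae_eq_Icc.symm
  have hlarge : ∫⁻ t in Ioc ε 1, altLaw ε (Iio t) * altLaw ε (Iio t) = ENNReal.ofReal (1 - ε) := by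
    rw [setLIntegral_congr_fun measurableSet_Ioc fun t ht ↦ by
        rw [altLaw_Iio_of_lt hε0 hε1 ht.1, one_mul],
      setLIntegral_one, Real.volume_Ioc]
  have hint : ∫ t in (0:ℝ)..ε, t * t = ε ^ 3 / 3 := by
    simp only [← sq, integral_pow]
    ring
  rw [← Icc_union_Ioc_eq_Icc hε0 hε1,
    lintegral_union measurableSet_Ioc (disjoint_left.2 fun _ h₁ h₂ ↦ h₁.2.not_gt h₂.1),
    hsmall, hlarge, setLIntegral_Ioc_ofReal_eq_intervalIntegral hε0
      (by fun_prop : Continuous fun t : ℝ ↦ t * t).integrableOn_Ioc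
      fun t _ ↦ mul_self_nonneg _, hint, ← ENNReal.ofReal_add (by positivity) (by linarith)]
  ring_nf

/-- Violation example with `m = 3`: one null `p₁ ~ U[0,1]` and two i.i.d.
alternatives with law `ε·U[0,ε] + (1-ε)·δ_ε`. The procedure rejecting only the
smallest p-value has `FDR⁽¹⁾ = Pr(p₁ < min(p₂,p₃)) = ε(ε²/3 + ε(1-ε) + (1-ε)²)`,
the procedure rejecting the two smallest has
`FDR⁽²⁾ = (1 - Pr(p₁ > max(p₂,p₃)))/2 = ε/2 - ε³/6`, and
`FDR⁽¹⁾ > FDR⁽²⁾` for all sufficiently small `ε > 0`. -/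
theorem fdr_violation_example_exact {Ω : Type*} [MeasurableSpace Ω]
    (μ : Measure Ω) [IsProbabilityMeasure μ] (ε : ℝ) (hε0 : 0 < ε) (hε1 : ε < 1)
    (p : Fin 3 → Ω → ℝ) (hmeas : ∀ i, Measurable (p i))
    (hindep : iIndepFun p μ)
    (hnull : Measure.map (p 0) μ = volume.restrict (Set.Icc (0:ℝ) 1))
    (halt1 : Measure.map (p 1) μ = altLaw ε)
    (halt2 : Measure.map (p 2) μ = altLaw ε) :
    (μ {ω | p 0 ω < min (p 1 ω) (p 2 ω)}).toReal
        = ε * (ε ^ 2 / 3 + ε * (1 - ε) + (1 - ε) ^ 2) ∧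
    (1 - (μ {ω | max (p 1 ω) (p 2 ω) < p 0 ω}).toReal) / 2 = ε / 2 - ε ^ 3 / 6 ∧
    (∃ ε₀ > (0:ℝ), ∀ δ : ℝ, 0 < δ → δ < ε₀ →
      δ * (δ ^ 2 / 3 + δ * (1 - δ) + (1 - δ) ^ 2) > δ / 2 - δ ^ 3 / 6) := by
  refine ⟨?_, ?_, 1, one_pos, fun δ hδ0 hδ1 ↦ ?_⟩
  · rw [hindep.measure_lt_min_eq_lintegral hmeas (by decide) (by decide) (by decide), hnull, halt1,
      halt2, setLIntegral_altLaw_Ioi_mul_self hε0.le hε1.le,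
      ENNReal.toReal_ofReal (by nlinarith [sq_nonneg (1 - ε), pow_pos hε0 3])]
    ring
  · rw [hindep.measure_max_lt_eq_lintegral hmeas (by decide) (by decide) (by decide), hnull, halt1,
      halt2, setLIntegral_altLaw_Iio_mul_self hε0.le hε1.le,
      ENNReal.toReal_ofReal (by nlinarith [pow_pos hε0 3])]
    ring
  · have hgap : δ * (δ ^ 2 / 3 + δ * (1 - δ) + (1 - δ) ^ 2) - (δ / 2 - δ ^ 3 / 6)
        = δ * (1 - δ) ^ 2 / 2 := by ring
    have hgap_pos : 0 < δ * (1 - δ) ^ 2 / 2 := by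
      have : 0 < 1 - δ := by linarith
      positivity
    linarith
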